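/- arXiv:1912.11768 — 10 statements merged into one kernel-verified Lean document; each statement's English description precedes it below -/
import Mathlib

section
/- Let h₁, h₂ ∈ ℂ^M be nonzero vectors that are not parallel, i.e. sin²α := 1 − |h₁ᴴh₂|²/(‖h₁‖²‖h₂‖²) > 0, let r₁, r₂ ≥ 0 be SNR targets and σ² > 0 the noise power. Then the minimum NOMA transmission power P^NOMA = r₁(1+r₂)σ²/(‖h₁‖²(1+r₂ sin²α)) + r₂σ²/‖h₂‖² is at most the minimum ZFBF transmission power P^ZFBF = (σ²/sin²α)·(r₁/‖h₁‖² + r₂/‖h₂‖²). -/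
open scoped InnerProductSpace

/-!
Both powers are sums of one term per user, and the comparison holds term by term once
`0 < sin²α ≤ 1`. For the second user this is `1 ≤ 1 / sin²α`. For the first user it is
`(1 + r₂) / (1 + r₂ sin²α) ≤ 1 / sin²α`, i.e. `sin²α (1 + r₂) ≤ 1 + r₂ sin²α`, which is
`sin²α ≤ 1` again.
-/

/-- In the paper's notation `a = ‖h₁‖²`, `b = ‖h₂‖²` and `s = sin²α`. -/
noncomputable def nomaPower (a b r₁ r₂ σsq s : ℝ) : ℝ :=
  r₁ * (1 + r₂) * σsq / (a * (1 + r₂ * s)) + r₂ * σsq / b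

noncomputable def zfbfPower (a b r₁ r₂ σsq s : ℝ) : ℝ :=
  (σsq / s) * (r₁ / a + r₂ / b)

lemma mul_one_add_div_one_add_mul_le_div {r₁ r₂ s : ℝ} (hr₁ : 0 ≤ r₁) (hr₂ : 0 ≤ r₂)
    (hs₀ : 0 < s) (hs₁ : s ≤ 1) :
    r₁ * (1 + r₂) / (1 + r₂ * s) ≤ r₁ / s := by
  rw [div_le_div_iff₀ (by positivity) hs₀]
  nlinarith [mul_nonneg (mul_nonneg hr₁ hr₂) (sub_nonneg.2 hs₁)]

theorem nomaPower_le_zfbfPower {a b r₁ r₂ σsq s : ℝ} (ha : 0 ≤ a) (hb : 0 ≤ b)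
    (hr₁ : 0 ≤ r₁) (hr₂ : 0 ≤ r₂) (hσ : 0 ≤ σsq) (hs₀ : 0 < s) (hs₁ : s ≤ 1) :
    nomaPower a b r₁ r₂ σsq s ≤ zfbfPower a b r₁ r₂ σsq s := by
  have hr₂s : r₂ ≤ r₂ / s := le_div_self hr₂ hs₀ hs₁
  have key := mul_one_add_div_one_add_mul_le_div hr₁ hr₂ hs₀ hs₁
  calc nomaPower a b r₁ r₂ σsq s
      = σsq * (r₁ * (1 + r₂) / (1 + r₂ * s)) / a + σsq * r₂ / b := by
        unfold nomaPower; rw [mul_comm a, ← div_div]; ring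
    _ ≤ σsq * (r₁ / s) / a + σsq * (r₂ / s) / b := by gcongr
    _ = zfbfPower a b r₁ r₂ σsq s := by unfold zfbfPower; ring

theorem stmt_0_general (M : ℕ) (h₁ h₂ : EuclideanSpace ℂ (Fin M))
    (r₁ r₂ σsq : ℝ) (hr₁ : 0 ≤ r₁) (hr₂ : 0 ≤ r₂) (hσ : 0 < σsq)
    (s : ℝ) (hs : s = 1 - ‖⟪h₁, h₂⟫_ℂ‖ ^ 2 / (‖h₁‖ ^ 2 * ‖h₂‖ ^ 2))
    (hspos : 0 < s) :
    r₁ * (1 + r₂) * σsq / (‖h₁‖ ^ 2 * (1 + r₂ * s)) + r₂ * σsq / ‖h₂‖ ^ 2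
      ≤ (σsq / s) * (r₁ / ‖h₁‖ ^ 2 + r₂ / ‖h₂‖ ^ 2) := by
  have hs₁ : s ≤ 1 := hs ▸ sub_le_self 1 (by positivity)
  exact nomaPower_le_zfbfPower (by positivity) (by positivity) hr₁ hr₂ hσ.le hspos hs₁

/-- Theorem 1 of the paper: with the same channels (same IRS phase shift matrix) and
quasi-degraded channels, `P^NOMA ≤ P^ZFBF`. -/
theorem stmt_0 (M : ℕ) (h₁ h₂ : EuclideanSpace ℂ (Fin M))
    (hh₁ : h₁ ≠ 0) (hh₂ : h₂ ≠ 0)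
    (r₁ r₂ σsq : ℝ) (hr₁ : 0 ≤ r₁) (hr₂ : 0 ≤ r₂) (hσ : 0 < σsq)
    (s : ℝ) (hs : s = 1 - ‖⟪h₁, h₂⟫_ℂ‖ ^ 2 / (‖h₁‖ ^ 2 * ‖h₂‖ ^ 2))
    (hspos : 0 < s) :
    r₁ * (1 + r₂) * σsq / (‖h₁‖ ^ 2 * (1 + r₂ * s)) + r₂ * σsq / ‖h₂‖ ^ 2
      ≤ (σsq / s) * (r₁ / ‖h₁‖ ^ 2 + r₂ / ‖h₂‖ ^ 2) :=
  stmt_0_general M h₁ h₂ r₁ r₂ σsq hr₁ hr₂ hσ s hs hspos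
end

section
/- Let h₁, h₂ ∈ ℂ^M with h₂ ≠ 0, and let r₁, r₂ ≥ 0. If the matrix h₁h₁ᴴ − (1+r₁)h₂h₂ᴴ is positive semidefinite, then |h₁ᴴh₂|² ≥ (1+r₁)‖h₂‖⁴ > 0, so h₁ᴴh₂ ≠ 0; moreover, with cos²α = |h₁ᴴh₂|²/(‖h₁‖²‖h₂‖²), the quasi-degradation inequality (1+r₁)/cos²α − r₁cos²α/(1+r₂(1−cos²α))² ≤ ‖h₁‖²/‖h₂‖² holds. -/
open scoped InnerProductSpace ComplexOrder

lemma quad_form {M : ℕ} (a x : Fin M → ℂ) :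
    dotProduct (star x)
        ((Matrix.vecMulVec a (fun i => starRingEnd ℂ (a i))).mulVec x)
      = (starRingEnd ℂ (∑ i, starRingEnd ℂ (a i) * x i)) * (∑ i, starRingEnd ℂ (a i) * x i) := by
  simp only [dotProduct, Matrix.mulVec, Matrix.vecMulVec_apply, map_sum, map_mul,
    Pi.star_apply, RCLike.star_def, starRingEnd_self_apply, Finset.mul_sum, Finset.sum_mul]
  rw [Finset.sum_comm]
  exact Finset.sum_congr rfl fun i _ => Finset.sum_congr rfl fun j _ => by ring

/-- Proposition 2 of the paper: if `h₁h₁ᴴ − (1+r₁)h₂h₂ᴴ ⪰ 0` (with `h₂ ≠ 0`), then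
`|h₁ᴴh₂|² ≥ (1+r₁)‖h₂‖⁴ > 0` (in particular `h₁ᴴh₂ ≠ 0`) and the quasi-degradation
inequality holds. -/
theorem stmt_1 (M : ℕ) (h₁ h₂ : EuclideanSpace ℂ (Fin M)) (hh₂ : h₂ ≠ 0)
    (r₁ r₂ : ℝ) (hr₁ : 0 ≤ r₁) (hr₂ : 0 ≤ r₂)
    (hpsd : (Matrix.vecMulVec (fun i => h₁ i) (fun i => starRingEnd ℂ (h₁ i)) -
        ((1 + r₁ : ℝ) : ℂ) •
          Matrix.vecMulVec (fun i => h₂ i) (fun i => starRingEnd ℂ (h₂ i))).PosSemidef) :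
    (1 + r₁) * ‖h₂‖ ^ 4 ≤ ‖⟪h₁, h₂⟫_ℂ‖ ^ 2 ∧ 0 < ‖⟪h₁, h₂⟫_ℂ‖ ^ 2 ∧
      (1 + r₁) / (‖⟪h₁, h₂⟫_ℂ‖ ^ 2 / (‖h₁‖ ^ 2 * ‖h₂‖ ^ 2)) -
          r₁ * (‖⟪h₁, h₂⟫_ℂ‖ ^ 2 / (‖h₁‖ ^ 2 * ‖h₂‖ ^ 2)) /
            (1 + r₂ * (1 - ‖⟪h₁, h₂⟫_ℂ‖ ^ 2 / (‖h₁‖ ^ 2 * ‖h₂‖ ^ 2))) ^ 2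
        ≤ ‖h₁‖ ^ 2 / ‖h₂‖ ^ 2 := by
  set a : ℂ := ⟪h₁, h₂⟫_ℂ with ha
  have hsum : (∑ i, starRingEnd ℂ (h₁ i) * h₂ i) = a := by
    simp [ha, PiLp.inner_apply, RCLike.inner_apply]
    exact Finset.sum_congr rfl fun _ _ => mul_comm _ _
  have hb : (∑ i, starRingEnd ℂ (h₂ i) * h₂ i) = ((‖h₂‖ ^ 2 : ℝ) : ℂ) := by
    have : (∑ i, starRingEnd ℂ (h₂ i) * h₂ i) = ⟪h₂, h₂⟫_ℂ := by
      simp only [PiLp.inner_apply, RCLike.inner_apply]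
      exact Finset.sum_congr rfl fun _ _ => mul_comm _ _
    rw [this, inner_self_eq_norm_sq_to_K]
    norm_cast
  have hq := hpsd.dotProduct_mulVec_nonneg (fun i => h₂ i)
  rw [Matrix.sub_mulVec, Matrix.smul_mulVec, dotProduct_sub,
    dotProduct_smul, quad_form h₁ (fun i => h₂ i), quad_form h₂ (fun i => h₂ i),
    hsum, hb] at hq
  have hn : (0:ℝ) < ‖h₂‖ := norm_pos_iff.mpr hh₂
  have hca : starRingEnd ℂ a * a = ((‖a‖ ^ 2 : ℝ) : ℂ) := by
    rw [Complex.conj_mul']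
    push_cast
    ring
  rw [hca] at hq
  have hq' : (0 : ℝ) ≤ ‖a‖ ^ 2 - (1 + r₁) * ‖h₂‖ ^ 4 := by
    have := hq.1
    simp only [Complex.zero_re, Complex.sub_re, Complex.ofReal_re, smul_eq_mul,
      Complex.mul_re, Complex.ofReal_im, Complex.mul_im, Complex.conj_ofReal] at this
    nlinarith [this]
  have hQ : (0 : ℝ) < ‖h₂‖ ^ 2 := by positivity
  have key1 : (1 + r₁) * ‖h₂‖ ^ 4 ≤ ‖a‖ ^ 2 := by linarith
  have h4 : (0:ℝ) < ‖h₂‖ ^ 4 := by positivity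
  have key2 : (0 : ℝ) < ‖a‖ ^ 2 := by nlinarith [key1, h4, mul_nonneg hr₁ h4.le]
  refine ⟨key1, key2, ?_⟩
  have hP : (0 : ℝ) < ‖h₁‖ ^ 2 := by
    rcases eq_or_ne h₁ 0 with rfl | h
    · simp [ha, inner_zero_left] at key2
    · exact pow_pos (norm_pos_iff.mpr h) 2
  set N := ‖a‖ ^ 2
  set P := ‖h₁‖ ^ 2
  set Q := ‖h₂‖ ^ 2
  have hQ4 : ‖h₂‖ ^ 4 = Q ^ 2 := by ring
  rw [hQ4] at key1
  have hterm : 0 ≤ r₁ * (N / (P * Q)) / (1 + r₂ * (1 - N / (P * Q))) ^ 2 :=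
    div_nonneg (mul_nonneg hr₁ (div_nonneg key2.le (by positivity))) (sq_nonneg _)
  have hmain : (1 + r₁) / (N / (P * Q)) ≤ P / Q := by
    rw [div_div_eq_mul_div, div_le_div_iff₀ key2 hQ]
    nlinarith [mul_le_mul_of_nonneg_left key1 hP.le]
  linarith
end

section
/- Let h₁, h₂ ∈ ℂ^M be nonzero, σ² > 0, r₁, r₂ ≥ 0, and c ∈ [0,1]. Define φ₁² = (r₁σ²/‖h₁‖²)·1/(1+r₂(1−c))², φ₂² = r₂σ²/‖h₂‖² + (r₁σ²/‖h₁‖²)·r₂c/(1+r₂(1−c))², and F = φ₁²((1+r₂)² − (2+r₂)r₂c) + φ₂². Then F ≤ σ²r₁(1+r₂)/‖h₁‖² + σ²r₂/‖h₂‖². -/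
open scoped InnerProductSpace

/-! The two terms carrying `r₁σ²/‖h₁‖²` combine, via the factorisation
`(1+r₂)² − (2+r₂)r₂c + r₂c = (1+r₂)(1+r₂(1−c))`, into `(r₁σ²/‖h₁‖²)(1+r₂)/(1+r₂(1−c))`,
and the denominator `1 + r₂(1−c)` is at least `1` because `c ≤ 1`. -/

lemma noma_power_coeff_eq (A r c : ℝ) (hd : 1 + r * (1 - c) ≠ 0) :
    A * (1 / (1 + r * (1 - c)) ^ 2) * ((1 + r) ^ 2 - (2 + r) * r * c) +
        A * (r * c / (1 + r * (1 - c)) ^ 2) =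
      A * (1 + r) / (1 + r * (1 - c)) := by
  field_simp
  ring

lemma one_le_one_add_mul_one_sub {r c : ℝ} (hr : 0 ≤ r) (hc : c ≤ 1) : 1 ≤ 1 + r * (1 - c) :=
  le_add_of_nonneg_right (mul_nonneg hr (sub_nonneg.mpr hc))

theorem stmt_2_general (M : ℕ) (h₁ h₂ : EuclideanSpace ℂ (Fin M))
    (σsq r₁ r₂ c : ℝ) (hσ : 0 < σsq) (hr₁ : 0 ≤ r₁) (hr₂ : 0 ≤ r₂)
    (hc1 : c ≤ 1) :
    (r₁ * σsq / ‖h₁‖ ^ 2) * (1 / (1 + r₂ * (1 - c)) ^ 2) *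
        ((1 + r₂) ^ 2 - (2 + r₂) * r₂ * c) +
      (r₂ * σsq / ‖h₂‖ ^ 2 +
        (r₁ * σsq / ‖h₁‖ ^ 2) * (r₂ * c / (1 + r₂ * (1 - c)) ^ 2))
      ≤ σsq * r₁ * (1 + r₂) / ‖h₁‖ ^ 2 + σsq * r₂ / ‖h₂‖ ^ 2 := by
  have hd := one_le_one_add_mul_one_sub hr₂ hc1
  have hcoeff := noma_power_coeff_eq (r₁ * σsq / ‖h₁‖ ^ 2) r₂ c (by linarith)
  calc _ = r₂ * σsq / ‖h₂‖ ^ 2 + r₁ * σsq / ‖h₁‖ ^ 2 * (1 + r₂) / (1 + r₂ * (1 - c)) := by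
        rw [← hcoeff]; ring
    _ ≤ r₂ * σsq / ‖h₂‖ ^ 2 + r₁ * σsq / ‖h₁‖ ^ 2 * (1 + r₂) := by
        gcongr
        exact div_le_self (by positivity) hd
    _ = _ := by ring

/-- Proposition 3 of the paper: an upper bound on the NOMA transmission power
`F = φ₁²((1+r₂)² − (2+r₂)r₂c) + φ₂²`. -/
theorem stmt_2 (M : ℕ) (h₁ h₂ : EuclideanSpace ℂ (Fin M)) (hh₁ : h₁ ≠ 0) (hh₂ : h₂ ≠ 0)
    (σsq r₁ r₂ c : ℝ) (hσ : 0 < σsq) (hr₁ : 0 ≤ r₁) (hr₂ : 0 ≤ r₂)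
    (hc0 : 0 ≤ c) (hc1 : c ≤ 1) :
    (r₁ * σsq / ‖h₁‖ ^ 2) * (1 / (1 + r₂ * (1 - c)) ^ 2) *
        ((1 + r₂) ^ 2 - (2 + r₂) * r₂ * c) +
      (r₂ * σsq / ‖h₂‖ ^ 2 +
        (r₁ * σsq / ‖h₁‖ ^ 2) * (r₂ * c / (1 + r₂ * (1 - c)) ^ 2))
      ≤ σsq * r₁ * (1 + r₂) / ‖h₁‖ ^ 2 + σsq * r₂ / ‖h₂‖ ^ 2 :=
  stmt_2_general M h₁ h₂ σsq r₁ r₂ c hσ hr₁ hr₂ hc1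
end

section
/- For fixed r₁ ≥ 0 and r₂ ≥ 0 with r₁ + 1 > 0, the function L(c) = (1+r₁)/c − r₁c/(1+r₂(1−c))² is strictly decreasing on the interval (0,1]. -/
/-! The first term `(1 + r₁) / c` is strictly decreasing, while the subtracted term
`r₁ c / (1 + r₂ (1 - c))²` is nondecreasing on `[0, 1]`: its numerator grows and its
denominator, at least `1`, shrinks as `c` increases. -/

open Set

theorem StrictAntiOn.sub_monotoneOn {α β : Type*} [Preorder α] [AddCommGroup β]
    [PartialOrder β] [IsOrderedAddMonoid β] {f g : α → β} {s : Set α}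
    (hf : StrictAntiOn f s) (hg : MonotoneOn g s) :
    StrictAntiOn (fun x => f x - g x) s :=
  fun _ hx _ hy hxy =>
    (sub_le_sub_left (hg hx hy hxy.le) _).trans_lt (sub_lt_sub_right (hf hx hy hxy) _)

section OrderedField

variable {α : Type*} [Field α] [LinearOrder α] [IsStrictOrderedRing α]

theorem strictAntiOn_const_div {a : α} (ha : 0 < a) : StrictAntiOn (fun c => a / c) (Ioi 0) :=
  fun _ hx _ _ hxy => div_lt_div_of_pos_left ha hx hxy

theorem monotoneOn_mul_div_one_add_mul_one_sub_sq {a b : α} (ha : 0 ≤ a) (hb : 0 ≤ b) :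
    MonotoneOn (fun c => a * c / (1 + b * (1 - c)) ^ 2) (Icc 0 1) := by
  intro x ⟨hx₀, _⟩ y ⟨_, hy₁⟩ hxy
  have hDy : 1 ≤ 1 + b * (1 - y) := le_add_of_nonneg_right (mul_nonneg hb (sub_nonneg.2 hy₁))
  have hD : 1 + b * (1 - y) ≤ 1 + b * (1 - x) := by gcongr
  apply div_le_div₀ (by positivity) (by gcongr) (by positivity)
  exact pow_le_pow_left₀ (zero_le_one.trans hDy) hD 2

end OrderedField

theorem stmt_7_general (r₁ r₂ : ℝ) (hr₁ : 0 ≤ r₁) (hr₂ : 0 ≤ r₂) :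
    StrictAntiOn (fun c : ℝ => (1 + r₁) / c - r₁ * c / (1 + r₂ * (1 - c)) ^ 2)
      (Set.Ioc 0 1) :=
  ((strictAntiOn_const_div (by positivity)).mono Ioc_subset_Ioi_self).sub_monotoneOn
    ((monotoneOn_mul_div_one_add_mul_one_sub_sq hr₁ hr₂).mono Ioc_subset_Icc_self)

/-- Monotonicity claim from Appendix B of the paper (proof of Corollary 1): the
quasi-degradation function `L(c)` is strictly decreasing on `(0, 1]`. -/
theorem stmt_7 (r₁ r₂ : ℝ) (hr₁ : 0 ≤ r₁) (hr₂ : 0 ≤ r₂) (h : 0 < r₁ + 1) :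
    StrictAntiOn (fun c : ℝ => (1 + r₁) / c - r₁ * c / (1 + r₂ * (1 - c)) ^ 2)
      (Set.Ioc 0 1) :=
  stmt_7_general r₁ r₂ hr₁ hr₂
end

section
/- Let r₁, r₂ ≥ 0, κ ∈ (0,1], and define L(c) = (1+r₁)/c − r₁c/(1+r₂(1−c))². Let h₁, h₂ ∈ ℂ^M be nonzero with cos²α = |h₁ᴴh₂|²/(‖h₁‖²‖h₂‖²) ≥ κ. If ‖h₁‖²/‖h₂‖² ≥ L(κ), then the quasi-degradation inequality L(cos²α) ≤ ‖h₁‖²/‖h₂‖² holds. -/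
open scoped InnerProductSpace

lemma norm_inner_sq_div_le_one {𝕜 E : Type*} [RCLike 𝕜] [SeminormedAddCommGroup E]
    [InnerProductSpace 𝕜 E] (x y : E) :
    ‖⟪x, y⟫_𝕜‖ ^ 2 / (‖x‖ ^ 2 * ‖y‖ ^ 2) ≤ 1 := by
  refine div_le_one_of_le₀ ?_ (by positivity)
  rw [← mul_pow]
  exact pow_le_pow_left₀ (norm_nonneg _) (norm_inner_le_norm x y) 2

/-- The function `L` of the paper. -/
noncomputable def quasiDegradationBound (r₁ r₂ c : ℝ) : ℝ :=
  (1 + r₁) / c - r₁ * c / (1 + r₂ * (1 - c)) ^ 2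

lemma quasiDegradationBound_antitoneOn {r₁ r₂ : ℝ} (hr₁ : 0 ≤ r₁) (hr₂ : 0 ≤ r₂) :
    AntitoneOn (quasiDegradationBound r₁ r₂) (Set.Ioc 0 1) := by
  rintro a ⟨ha0, ha1⟩ b ⟨hb0, hb1⟩ hab
  have hden_b : 0 < 1 + r₂ * (1 - b) := by nlinarith
  have hden_le : 1 + r₂ * (1 - b) ≤ 1 + r₂ * (1 - a) := by nlinarith
  have hfirst : (1 + r₁) / b ≤ (1 + r₁) / a :=
    div_le_div_of_nonneg_left (by linarith) ha0 hab
  have hsecond : r₁ * a / (1 + r₂ * (1 - a)) ^ 2 ≤ r₁ * b / (1 + r₂ * (1 - b)) ^ 2 :=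
    div_le_div₀ (by positivity) (mul_le_mul_of_nonneg_left hab hr₁) (by positivity)
      (pow_le_pow_left₀ hden_b.le hden_le 2)
  unfold quasiDegradationBound
  linarith

theorem stmt_9_general (M : ℕ) (r₁ r₂ κ : ℝ) (hr₁ : 0 ≤ r₁) (hr₂ : 0 ≤ r₂)
    (hκ : κ ∈ Set.Ioc (0 : ℝ) 1)
    (h₁ h₂ : EuclideanSpace ℂ (Fin M))
    (c : ℝ) (hc : c = ‖⟪h₁, h₂⟫_ℂ‖ ^ 2 / (‖h₁‖ ^ 2 * ‖h₂‖ ^ 2)) (hcκ : κ ≤ c)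
    (hdom : (1 + r₁) / κ - r₁ * κ / (1 + r₂ * (1 - κ)) ^ 2 ≤ ‖h₁‖ ^ 2 / ‖h₂‖ ^ 2) :
    (1 + r₁) / c - r₁ * c / (1 + r₂ * (1 - c)) ^ 2 ≤ ‖h₁‖ ^ 2 / ‖h₂‖ ^ 2 := by
  have hc_mem : c ∈ Set.Ioc (0 : ℝ) 1 :=
    ⟨hκ.1.trans_le hcκ, hc ▸ norm_inner_sq_div_le_one h₁ h₂⟩
  exact (quasiDegradationBound_antitoneOn hr₁ hr₂ hκ hc_mem hcκ).trans hdom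

/-- Corollary 1 of the paper: if `cos²α ≥ κ > 0` and `‖h₁‖²/‖h₂‖² ≥ L(κ)`, then the
quasi-degradation inequality `L(cos²α) ≤ ‖h₁‖²/‖h₂‖²` holds. -/
theorem stmt_9 (M : ℕ) (r₁ r₂ κ : ℝ) (hr₁ : 0 ≤ r₁) (hr₂ : 0 ≤ r₂)
    (hκ : κ ∈ Set.Ioc (0 : ℝ) 1)
    (h₁ h₂ : EuclideanSpace ℂ (Fin M)) (hh₁ : h₁ ≠ 0) (hh₂ : h₂ ≠ 0)
    (c : ℝ) (hc : c = ‖⟪h₁, h₂⟫_ℂ‖ ^ 2 / (‖h₁‖ ^ 2 * ‖h₂‖ ^ 2)) (hcκ : κ ≤ c)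
    (hdom : (1 + r₁) / κ - r₁ * κ / (1 + r₂ * (1 - κ)) ^ 2 ≤ ‖h₁‖ ^ 2 / ‖h₂‖ ^ 2) :
    (1 + r₁) / c - r₁ * c / (1 + r₂ * (1 - c)) ^ 2 ≤ ‖h₁‖ ^ 2 / ‖h₂‖ ^ 2 :=
  stmt_9_general M r₁ r₂ κ hr₁ hr₂ hκ h₁ h₂ c hc hcκ hdom
end

section
/- Let h₁, h₂ ∈ ℂ^M be linearly independent, σ² > 0, r₁, r₂ > 0, and sin²α = 1 − |h₁ᴴh₂|²/(‖h₁‖²‖h₂‖²) > 0. Consider the feasible set of beamformer pairs (w₁,w₂) ∈ ℂ^M × ℂ^M satisfying |h₁ᴴw₁|² ≥ r₁σ², |h₂ᴴw₂|² ≥ r₂σ², h₁ᴴw₂ = 0, and h₂ᴴw₁ = 0. Then the minimum of ‖w₁‖² + ‖w₂‖² over this feasible set equals (σ²/sin²α)(r₁/‖h₁‖² + r₂/‖h₂‖²), attained by w₁* = σ√r₁·a₁/(‖h₁‖²‖h₂‖²sin²α) and w₂* = σ√r₂·a₂/(‖h₁‖²‖h₂‖²sin²α), where a₁ = ‖h₂‖²h₁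 − (h₂ᴴh₁)h₂ and a₂ = ‖h₁‖²h₂ − (h₁ᴴh₂)h₁. -/
/-!
Zero forcing decouples the problem into one problem per user: minimise `‖w‖²` subject to
`⟪k, w⟫ = 0` and `|⟪h, w⟫|² ≥ t²`. For `w ⊥ k` one has `⟪h, w⟫ = ⟪a, w⟫ / ‖k‖²` with
`a = ‖k‖² h - ⟪k, h⟫ k ⊥ k`, and `‖a‖² = ‖k‖² G` where `G = ‖h‖²‖k‖² - |⟪h, k⟫|²` is the Gram
determinant, so Cauchy–Schwarz gives `‖w‖² ≥ t² ‖k‖² / G`, with equality for `w` a multiple of `a`.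
Since `G = ‖h₁‖²‖h₂‖² sin²α`, this is the claimed optimum.
-/

open scoped InnerProductSpace

lemma IsLeast.image_add_prod {α β γ : Type*} [Add γ] [Preorder γ] [AddLeftMono γ]
    [AddRightMono γ] {f : α → γ} {g : β → γ} {A : Set α} {B : Set β} {a b : γ} (ha : IsLeast (f '' A) a) (hb : IsLeast (g '' B) b) :
    IsLeast ((fun p : α × β => f p.1 + g p.2) '' A ×ˢ B) (a + b) := by
  obtain ⟨⟨x, hxA, rfl⟩, hxlow⟩ := ha
  obtain ⟨⟨y, hyB, rfl⟩, hylow⟩ := hb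
  refine ⟨⟨(x, y), ⟨hxA, hyB⟩, rfl⟩, ?_⟩
  rintro _ ⟨p, ⟨hp₁, hp₂⟩, rfl⟩
  exact add_le_add (hxlow ⟨p.1, hp₁, rfl⟩) (hylow ⟨p.2, hp₂, rfl⟩)

namespace ZeroForcing

variable {E : Type*} [NormedAddCommGroup E] [InnerProductSpace ℂ E]

noncomputable def gramDet (h k : E) : ℝ := ‖h‖ ^ 2 * ‖k‖ ^ 2 - ‖⟪h, k⟫_ℂ‖ ^ 2

/-- `‖k‖²` times the component of `h` orthogonal to `k`. -/
noncomputable def dir (h k : E) : E := ((‖k‖ ^ 2 : ℝ) : ℂ) • h - ⟪k, h⟫_ℂ • k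

def feasible (h k : E) (t : ℝ) : Set E := {w | t ^ 2 ≤ ‖⟪h, w⟫_ℂ‖ ^ 2 ∧ ⟪k, w⟫_ℂ = 0}

noncomputable def beam (h k : E) (t : ℝ) : E := ((t / gramDet h k : ℝ) : ℂ) • dir h k

lemma gramDet_comm (h k : E) : gramDet k h = gramDet h k := by
  rw [gramDet, gramDet, norm_inner_symm]; ring

lemma inner_dir_eq_zero (h k : E) : ⟪k, dir h k⟫_ℂ = 0 := by
  simp only [dir, inner_sub_right, inner_smul_right, inner_self_eq_norm_sq_to_K,
    RCLike.ofReal_eq_complex_ofReal]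
  push_cast
  ring

lemma inner_dir_eq_gramDet (h k : E) : ⟪h, dir h k⟫_ℂ = gramDet h k := by
  have hconj : (starRingEnd ℂ) ⟪h, k⟫_ℂ * ⟪h, k⟫_ℂ = ((‖⟪h, k⟫_ℂ‖ ^ 2 : ℝ) : ℂ) := by
    rw [RCLike.conj_mul]; push_cast; rfl
  simp only [dir, gramDet, inner_sub_right, inner_smul_right, inner_self_eq_norm_sq_to_K,
    RCLike.ofReal_eq_complex_ofReal]
  rw [← inner_conj_symm k h, hconj]
  push_cast
  ring

lemma inner_dir_left_of_inner_eq_zero {h k w : E} (hw : ⟪k, w⟫_ℂ = 0) :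
    ⟪dir h k, w⟫_ℂ = ((‖k‖ ^ 2 : ℝ) : ℂ) * ⟪h, w⟫_ℂ := by
  simp [dir, hw, Complex.conj_ofReal, mul_comm]

lemma norm_dir_sq (h k : E) : ‖dir h k‖ ^ 2 = ‖k‖ ^ 2 * gramDet h k := by
  have hself : ⟪dir h k, dir h k⟫_ℂ = ((‖k‖ ^ 2 * gramDet h k : ℝ) : ℂ) := by
    nth_rewrite 1 [dir]
    rw [inner_sub_left, inner_smul_left, inner_smul_left, inner_dir_eq_gramDet,
      inner_dir_eq_zero]
    simp [Complex.conj_ofReal]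
  rw [norm_sq_eq_re_inner (𝕜 := ℂ), hself]
  rfl

/-- Cauchy–Schwarz against `dir h k`, which has the same inner product as `‖k‖² h` with every
vector orthogonal to `k`. -/
lemma sq_norm_mul_sq_norm_inner_le {h k w : E} (hw : ⟪k, w⟫_ℂ = 0) :
    ‖k‖ ^ 2 * ‖⟪h, w⟫_ℂ‖ ^ 2 ≤ gramDet h k * ‖w‖ ^ 2 := by
  have hcs : (‖k‖ ^ 2 * ‖⟪h, w⟫_ℂ‖) ^ 2 ≤ ‖dir h k‖ ^ 2 * ‖w‖ ^ 2 := by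
    rw [← mul_pow]
    refine pow_le_pow_left₀ (by positivity) ?_ 2
    calc ‖k‖ ^ 2 * ‖⟪h, w⟫_ℂ‖ = ‖⟪dir h k, w⟫_ℂ‖ := by
          rw [inner_dir_left_of_inner_eq_zero hw, norm_mul, Complex.norm_real,
            Real.norm_of_nonneg (by positivity)]
      _ ≤ ‖dir h k‖ * ‖w‖ := norm_inner_le_norm _ _
  rw [norm_dir_sq] at hcs
  rcases (sq_nonneg ‖k‖).eq_or_lt with hk | hk
  · rw [← hk, zero_mul]
    have hk0 : k = 0 := by simpa [eq_comm] using hk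
    simp [gramDet, hk0]
  · nlinarith

lemma inner_beam_eq_zero (h k : E) (t : ℝ) : ⟪k, beam h k t⟫_ℂ = 0 := by
  rw [beam, inner_smul_right, inner_dir_eq_zero, mul_zero]

lemma inner_beam {h k : E} (hg : gramDet h k ≠ 0) (t : ℝ) : ⟪h, beam h k t⟫_ℂ = t := by
  rw [beam, inner_smul_right, inner_dir_eq_gramDet, ← Complex.ofReal_mul, div_mul_cancel₀ t hg]

lemma norm_beam_sq {h k : E} (hg : gramDet h k ≠ 0) (t : ℝ) :
    ‖beam h k t‖ ^ 2 = t ^ 2 * ‖k‖ ^ 2 / gramDet h k := by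
  rw [beam, norm_smul, mul_pow, Complex.norm_real, Real.norm_eq_abs, sq_abs, norm_dir_sq]
  field_simp

lemma beam_mem_feasible {h k : E} (hg : gramDet h k ≠ 0) (t : ℝ) :
    beam h k t ∈ feasible h k t := by
  refine ⟨?_, inner_beam_eq_zero h k t⟩
  rw [inner_beam hg, Complex.norm_real, Real.norm_eq_abs, sq_abs]

theorem isLeast_norm_sq {h k : E} (hg : 0 < gramDet h k) (t : ℝ) :
    IsLeast ((fun w : E => ‖w‖ ^ 2) '' feasible h k t) (t ^ 2 * ‖k‖ ^ 2 / gramDet h k) := by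
  refine ⟨⟨beam h k t, beam_mem_feasible hg.ne' t, norm_beam_sq hg.ne' t⟩, ?_⟩
  rintro _ ⟨w, ⟨hqos, hw⟩, rfl⟩
  rw [div_le_iff₀ hg]
  calc t ^ 2 * ‖k‖ ^ 2 = ‖k‖ ^ 2 * t ^ 2 := mul_comm _ _
    _ ≤ ‖k‖ ^ 2 * ‖⟪h, w⟫_ℂ‖ ^ 2 := by gcongr
    _ ≤ gramDet h k * ‖w‖ ^ 2 := sq_norm_mul_sq_norm_inner_le hw
    _ = ‖w‖ ^ 2 * gramDet h k := mul_comm _ _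

end ZeroForcing

open ZeroForcing in
theorem stmt_12_general (M : ℕ) (h₁ h₂ : EuclideanSpace ℂ (Fin M))
    (hind : LinearIndependent ℂ ![h₁, h₂])
    (σ r₁ r₂ : ℝ) (hr₁ : 0 < r₁) (hr₂ : 0 < r₂)
    (s : ℝ) (hs : s = 1 - ‖⟪h₁, h₂⟫_ℂ‖ ^ 2 / (‖h₁‖ ^ 2 * ‖h₂‖ ^ 2)) (hspos : 0 < s)
    (a₁ a₂ w₁ w₂ : EuclideanSpace ℂ (Fin M))
    (ha₁ : a₁ = ((‖h₂‖ ^ 2 : ℝ) : ℂ) • h₁ - ⟪h₂, h₁⟫_ℂ • h₂)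
    (ha₂ : a₂ = ((‖h₁‖ ^ 2 : ℝ) : ℂ) • h₂ - ⟪h₁, h₂⟫_ℂ • h₁)
    (hw₁ : w₁ = ((σ * Real.sqrt r₁ / (‖h₁‖ ^ 2 * ‖h₂‖ ^ 2 * s) : ℝ) : ℂ) • a₁)
    (hw₂ : w₂ = ((σ * Real.sqrt r₂ / (‖h₁‖ ^ 2 * ‖h₂‖ ^ 2 * s) : ℝ) : ℂ) • a₂) :
    IsLeast
      ((fun w : EuclideanSpace ℂ (Fin M) × EuclideanSpace ℂ (Fin M) =>
          ‖w.1‖ ^ 2 + ‖w.2‖ ^ 2) ''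
        {w : EuclideanSpace ℂ (Fin M) × EuclideanSpace ℂ (Fin M) |
          r₁ * σ ^ 2 ≤ ‖⟪h₁, w.1⟫_ℂ‖ ^ 2 ∧ r₂ * σ ^ 2 ≤ ‖⟪h₂, w.2⟫_ℂ‖ ^ 2 ∧
          ⟪h₁, w.2⟫_ℂ = 0 ∧ ⟪h₂, w.1⟫_ℂ = 0})
      ((σ ^ 2 / s) * (r₁ / ‖h₁‖ ^ 2 + r₂ / ‖h₂‖ ^ 2)) ∧
    (r₁ * σ ^ 2 ≤ ‖⟪h₁, w₁⟫_ℂ‖ ^ 2 ∧ r₂ * σ ^ 2 ≤ ‖⟪h₂, w₂⟫_ℂ‖ ^ 2 ∧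
      ⟪h₁, w₂⟫_ℂ = 0 ∧ ⟪h₂, w₁⟫_ℂ = 0) ∧
    ‖w₁‖ ^ 2 + ‖w₂‖ ^ 2 = (σ ^ 2 / s) * (r₁ / ‖h₁‖ ^ 2 + r₂ / ‖h₂‖ ^ 2) := by
  have hn₁ : ‖h₁‖ ≠ 0 := norm_ne_zero_iff.mpr (by simpa using hind.ne_zero 0)
  have hn₂ : ‖h₂‖ ≠ 0 := norm_ne_zero_iff.mpr (by simpa using hind.ne_zero 1)
  have hG₁ : gramDet h₁ h₂ = ‖h₁‖ ^ 2 * ‖h₂‖ ^ 2 * s := by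
    rw [gramDet, hs]; field_simp
  have hG₂ : gramDet h₂ h₁ = ‖h₁‖ ^ 2 * ‖h₂‖ ^ 2 * s := by rw [gramDet_comm, hG₁]
  have hGpos₁ : 0 < gramDet h₁ h₂ := hG₁ ▸ by positivity
  have hGpos₂ : 0 < gramDet h₂ h₁ := hG₂ ▸ by positivity
  have hq₁ : r₁ * σ ^ 2 = (σ * √r₁) ^ 2 := by rw [mul_pow, Real.sq_sqrt hr₁.le, mul_comm]
  have hq₂ : r₂ * σ ^ 2 = (σ * √r₂) ^ 2 := by rw [mul_pow, Real.sq_sqrt hr₂.le, mul_comm]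
  have hopt : (σ ^ 2 / s) * (r₁ / ‖h₁‖ ^ 2 + r₂ / ‖h₂‖ ^ 2) =
      (σ * √r₁) ^ 2 * ‖h₂‖ ^ 2 / gramDet h₁ h₂ + (σ * √r₂) ^ 2 * ‖h₁‖ ^ 2 / gramDet h₂ h₁ := by
    rw [hG₁, hG₂, ← hq₁, ← hq₂]; field_simp
  have hfeas : {w : EuclideanSpace ℂ (Fin M) × EuclideanSpace ℂ (Fin M) |
      r₁ * σ ^ 2 ≤ ‖⟪h₁, w.1⟫_ℂ‖ ^ 2 ∧ r₂ * σ ^ 2 ≤ ‖⟪h₂, w.2⟫_ℂ‖ ^ 2 ∧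
        ⟪h₁, w.2⟫_ℂ = 0 ∧ ⟪h₂, w.1⟫_ℂ = 0} =
      feasible h₁ h₂ (σ * √r₁) ×ˢ feasible h₂ h₁ (σ * √r₂) := by
    ext w; simp only [feasible, Set.mem_ofPred_eq, Set.mem_prod, hq₁, hq₂]; tauto
  have hw₁ : w₁ = beam h₁ h₂ (σ * √r₁) := by rw [hw₁, ha₁, ← hG₁]; rfl
  have hw₂ : w₂ = beam h₂ h₁ (σ * √r₂) := by rw [hw₂, ha₂, ← hG₂]; rfl
  obtain ⟨hqos₁, hzf₁⟩ := hw₁ ▸ beam_mem_feasible hGpos₁.ne' (σ * √r₁)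
  obtain ⟨hqos₂, hzf₂⟩ := hw₂ ▸ beam_mem_feasible hGpos₂.ne' (σ * √r₂)
  refine ⟨?_, ⟨hq₁ ▸ hqos₁, hq₂ ▸ hqos₂, hzf₂, hzf₁⟩, ?_⟩
  · rw [hfeas, hopt]
    exact (isLeast_norm_sq hGpos₁ _).image_add_prod (isLeast_norm_sq hGpos₂ _)
  · rw [hw₁, hw₂, norm_beam_sq hGpos₁.ne', norm_beam_sq hGpos₂.ne', hopt]

/-- Lemma 3 of the paper: the zero-forcing beamforming power-minimization problem with QoS
constraints has minimum value `P^ZFBF = (σ²/sin²α)(r₁/‖h₁‖² + r₂/‖h₂‖²)`, attained by the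
closed-form Moore–Penrose beamformers `w₁*, w₂*`. -/
theorem stmt_12 (M : ℕ) (h₁ h₂ : EuclideanSpace ℂ (Fin M))
    (hind : LinearIndependent ℂ ![h₁, h₂])
    (σ r₁ r₂ : ℝ) (hσ : 0 < σ) (hr₁ : 0 < r₁) (hr₂ : 0 < r₂)
    (s : ℝ) (hs : s = 1 - ‖⟪h₁, h₂⟫_ℂ‖ ^ 2 / (‖h₁‖ ^ 2 * ‖h₂‖ ^ 2)) (hspos : 0 < s)
    (a₁ a₂ w₁ w₂ : EuclideanSpace ℂ (Fin M))
    (ha₁ : a₁ = ((‖h₂‖ ^ 2 : ℝ) : ℂ) • h₁ - ⟪h₂, h₁⟫_ℂ • h₂)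
    (ha₂ : a₂ = ((‖h₁‖ ^ 2 : ℝ) : ℂ) • h₂ - ⟪h₁, h₂⟫_ℂ • h₁)
    (hw₁ : w₁ = ((σ * Real.sqrt r₁ / (‖h₁‖ ^ 2 * ‖h₂‖ ^ 2 * s) : ℝ) : ℂ) • a₁)
    (hw₂ : w₂ = ((σ * Real.sqrt r₂ / (‖h₁‖ ^ 2 * ‖h₂‖ ^ 2 * s) : ℝ) : ℂ) • a₂) :
    IsLeast
      ((fun w : EuclideanSpace ℂ (Fin M) × EuclideanSpace ℂ (Fin M) =>
          ‖w.1‖ ^ 2 + ‖w.2‖ ^ 2) ''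
        {w : EuclideanSpace ℂ (Fin M) × EuclideanSpace ℂ (Fin M) |
          r₁ * σ ^ 2 ≤ ‖⟪h₁, w.1⟫_ℂ‖ ^ 2 ∧ r₂ * σ ^ 2 ≤ ‖⟪h₂, w.2⟫_ℂ‖ ^ 2 ∧
          ⟪h₁, w.2⟫_ℂ = 0 ∧ ⟪h₂, w.1⟫_ℂ = 0})
      ((σ ^ 2 / s) * (r₁ / ‖h₁‖ ^ 2 + r₂ / ‖h₂‖ ^ 2)) ∧
    (r₁ * σ ^ 2 ≤ ‖⟪h₁, w₁⟫_ℂ‖ ^ 2 ∧ r₂ * σ ^ 2 ≤ ‖⟪h₂, w₂⟫_ℂ‖ ^ 2 ∧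
      ⟪h₁, w₂⟫_ℂ = 0 ∧ ⟪h₂, w₁⟫_ℂ = 0) ∧
    ‖w₁‖ ^ 2 + ‖w₂‖ ^ 2 = (σ ^ 2 / s) * (r₁ / ‖h₁‖ ^ 2 + r₂ / ‖h₂‖ ^ 2) :=
  stmt_12_general M h₁ h₂ hind σ r₁ r₂ hr₁ hr₂ s hs hspos a₁ a₂ w₁ w₂ ha₁ ha₂ hw₁ hw₂
end

section
/- Let h₁, h₂ ∈ ℂ^M be linearly independent, σ² > 0, r₁ > 0, and sin²α = 1 − |h₁ᴴh₂|²/(‖h₁‖²‖h₂‖²) > 0. Then the minimum of ‖w‖² over all w ∈ ℂ^M with h₂ᴴw = 0 and |h₁ᴴw|² ≥ r₁σ² equals r₁σ²/(‖h₁‖²sin²α), and it is attained at w = σ√r₁·(‖h₂‖²h₁ − (h₂ᴴh₁)h₂)/(‖h₁‖²‖h₂‖²sin²α). -/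
open scoped InnerProductSpace

/-! By Cauchy–Schwarz, for `u` in a subspace `K` with orthogonal projection `P` one has
`|⟪x, u⟫| = |⟪P x, u⟫| ≤ ‖P x‖ ‖u‖`, so
`|⟪x, u⟫| ≥ a` forces `‖u‖² ≥ a² / ‖P x‖²`, with equality for `u` a multiple of `P x`.
Here `K = h₂ᗮ`, and Pythagoras gives `‖P h₁‖² = ‖h₁‖² - |⟪h₂, h₁⟫|² / ‖h₂‖² = ‖h₁‖² sin²α`. -/

namespace Submodule

variable {𝕜 E : Type*} [RCLike 𝕜] [NormedAddCommGroup E] [InnerProductSpace 𝕜 E]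

section

variable (K : Submodule 𝕜 E) [K.HasOrthogonalProjection]

theorem inner_starProjection_left_of_mem (x : E) {u : E} (hu : u ∈ K) :
    ⟪K.starProjection x, u⟫_𝕜 = ⟪x, u⟫_𝕜 :=
  K.inner_orthogonalProjectionOnto_eq_of_mem_right ⟨u, hu⟩ x

theorem norm_inner_le_norm_starProjection_mul_norm (x : E) {u : E} (hu : u ∈ K) :
    ‖⟪x, u⟫_𝕜‖ ≤ ‖K.starProjection x‖ * ‖u‖ :=
  K.inner_starProjection_left_of_mem x hu ▸ norm_inner_le_norm _ _

theorem inner_starProjection_right_self (x : E) :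
    ⟪x, K.starProjection x⟫_𝕜 = ((‖K.starProjection x‖ ^ 2 : ℝ) : 𝕜) := by
  rw [← K.inner_starProjection_left_of_mem x (K.starProjection_apply_mem x),
    inner_self_eq_norm_sq_to_K, RCLike.ofReal_pow]

variable {K} {x : E} (hx : K.starProjection x ≠ 0) (a : ℝ)
include hx

theorem inner_smul_starProjection_div :
    ⟪x, ((a / ‖K.starProjection x‖ ^ 2 : ℝ) : 𝕜) • K.starProjection x⟫_𝕜 = (a : 𝕜) := by
  have : ‖K.starProjection x‖ ≠ 0 := norm_ne_zero_iff.mpr hx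
  rw [inner_smul_right, inner_starProjection_right_self, ← RCLike.ofReal_mul,
    div_mul_cancel₀ _ (by positivity)]

theorem norm_sq_inner_smul_starProjection_div :
    ‖⟪x, ((a / ‖K.starProjection x‖ ^ 2 : ℝ) : 𝕜) • K.starProjection x⟫_𝕜‖ ^ 2 = a ^ 2 := by
  rw [inner_smul_starProjection_div hx, RCLike.norm_ofReal, sq_abs]

theorem norm_sq_smul_starProjection_div :
    ‖((a / ‖K.starProjection x‖ ^ 2 : ℝ) : 𝕜) • K.starProjection x‖ ^ 2 =
      a ^ 2 / ‖K.starProjection x‖ ^ 2 := by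
  have : ‖K.starProjection x‖ ≠ 0 := norm_ne_zero_iff.mpr hx
  rw [norm_smul, RCLike.norm_ofReal, mul_pow, abs_div, div_pow, sq_abs, abs_pow, abs_norm]
  field_simp

theorem isLeast_norm_sq_of_sq_le_norm_inner_sq :
    IsLeast ((fun u : E => ‖u‖ ^ 2) '' {u | u ∈ K ∧ a ^ 2 ≤ ‖⟪x, u⟫_𝕜‖ ^ 2})
      (a ^ 2 / ‖K.starProjection x‖ ^ 2) := by
  refine ⟨⟨_, ⟨K.smul_mem _ (K.starProjection_apply_mem x),
    (norm_sq_inner_smul_starProjection_div hx a).ge⟩, norm_sq_smul_starProjection_div hx a⟩, ?_⟩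
  rintro _ ⟨u, ⟨hu, ha⟩, rfl⟩
  have hpos : 0 < ‖K.starProjection x‖ ^ 2 := by positivity
  rw [div_le_iff₀ hpos]
  calc a ^ 2 ≤ ‖⟪x, u⟫_𝕜‖ ^ 2 := ha
    _ ≤ (‖K.starProjection x‖ * ‖u‖) ^ 2 := by
      gcongr; exact K.norm_inner_le_norm_starProjection_mul_norm x hu
    _ = ‖u‖ ^ 2 * ‖K.starProjection x‖ ^ 2 := by ring

end

theorem starProjection_orthogonal_singleton (v x : E) :
    (𝕜 ∙ v)ᗮ.starProjection x = x - (⟪v, x⟫_𝕜 / ((‖v‖ ^ 2 : ℝ) : 𝕜)) • v := by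
  rw [starProjection_orthogonal', sub_apply, starProjection_singleton]
  rfl

theorem norm_sq_starProjection_orthogonal_singleton (v x : E) :
    ‖(𝕜 ∙ v)ᗮ.starProjection x‖ ^ 2 = ‖x‖ ^ 2 - ‖⟪v, x⟫_𝕜‖ ^ 2 / ‖v‖ ^ 2 := by
  rw [norm_sq_eq_add_norm_sq_starProjection x (𝕜 ∙ v), starProjection_singleton, norm_smul,
    norm_div, RCLike.norm_ofReal, abs_pow, abs_norm, mul_pow, div_pow]
  rcases eq_or_ne v 0 with rfl | hv
  · simp
  · have : ‖v‖ ≠ 0 := norm_ne_zero_iff.mpr hv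
    field_simp
    ring

end Submodule

open Submodule in
theorem stmt_13_general (M : ℕ) (h₁ h₂ : EuclideanSpace ℂ (Fin M))
    (hind : LinearIndependent ℂ ![h₁, h₂])
    (σ r₁ : ℝ) (hr₁ : 0 < r₁)
    (s : ℝ) (hs : s = 1 - ‖⟪h₁, h₂⟫_ℂ‖ ^ 2 / (‖h₁‖ ^ 2 * ‖h₂‖ ^ 2)) (hspos : 0 < s)
    (w : EuclideanSpace ℂ (Fin M))
    (hw : w = ((σ * Real.sqrt r₁ / (‖h₁‖ ^ 2 * ‖h₂‖ ^ 2 * s) : ℝ) : ℂ) •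
        (((‖h₂‖ ^ 2 : ℝ) : ℂ) • h₁ - ⟪h₂, h₁⟫_ℂ • h₂)) :
    IsLeast
      ((fun u : EuclideanSpace ℂ (Fin M) => ‖u‖ ^ 2) ''
        {u : EuclideanSpace ℂ (Fin M) | ⟪h₂, u⟫_ℂ = 0 ∧ r₁ * σ ^ 2 ≤ ‖⟪h₁, u⟫_ℂ‖ ^ 2})
      (r₁ * σ ^ 2 / (‖h₁‖ ^ 2 * s)) ∧
    (⟪h₂, w⟫_ℂ = 0 ∧ r₁ * σ ^ 2 ≤ ‖⟪h₁, w⟫_ℂ‖ ^ 2) ∧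
    ‖w‖ ^ 2 = r₁ * σ ^ 2 / (‖h₁‖ ^ 2 * s) := by
  have hn₁ : ‖h₁‖ ≠ 0 := norm_ne_zero_iff.mpr (by simpa using hind.ne_zero 0)
  have hn₂ : ‖h₂‖ ≠ 0 := norm_ne_zero_iff.mpr (by simpa using hind.ne_zero 1)
  set p := (ℂ ∙ h₂)ᗮ.starProjection h₁ with hp
  have hnp : ‖p‖ ^ 2 = ‖h₁‖ ^ 2 * s := by
    rw [hp, norm_sq_starProjection_orthogonal_singleton, hs, norm_inner_symm]
    field_simp
  have hp0 : p ≠ 0 := by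
    rw [← norm_ne_zero_iff, ← pow_ne_zero_iff two_ne_zero, hnp]; positivity
  have hrσ : r₁ * σ ^ 2 = (σ * Real.sqrt r₁) ^ 2 := by
    rw [mul_pow, Real.sq_sqrt hr₁.le, mul_comm]
  have hdir : ((‖h₂‖ ^ 2 : ℝ) : ℂ) • h₁ - ⟪h₂, h₁⟫_ℂ • h₂ = ((‖h₂‖ ^ 2 : ℝ) : ℂ) • p := by
    rw [hp, starProjection_orthogonal_singleton, smul_sub, smul_smul]
    congr 2
    exact (mul_div_cancel₀ _ (by simpa using hn₂)).symm
  have hwp : w = ((σ * Real.sqrt r₁ / ‖p‖ ^ 2 : ℝ) : ℂ) • p := by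
    rw [hw, hdir, smul_smul, hnp, ← Complex.ofReal_mul]
    congr 2
    field_simp
  have hmin := isLeast_norm_sq_of_sq_le_norm_inner_sq hp0 (σ * Real.sqrt r₁)
  simp only [mem_orthogonal_singleton_iff_inner_right] at hmin
  rw [← hnp, hrσ]
  refine ⟨hmin, ⟨?_, ?_⟩, ?_⟩ <;> rw [hwp]
  · exact mem_orthogonal_singleton_iff_inner_right.mp (smul_mem _ _ (starProjection_apply_mem _ _))
  · exact (norm_sq_inner_smul_starProjection_div hp0 _).ge
  · exact norm_sq_smul_starProjection_div hp0 _

/-- The core single-user minimum-norm claim in the proof of Lemma 3 (Appendix E): among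
`w ⊥ h₂` with `|h₁ᴴw|² ≥ r₁σ²`, the minimum of `‖w‖²` is `r₁σ²/(‖h₁‖² sin²α)`, attained
at the scaled projection of `h₁` onto the orthogonal complement of `h₂`. -/
theorem stmt_13 (M : ℕ) (h₁ h₂ : EuclideanSpace ℂ (Fin M))
    (hind : LinearIndependent ℂ ![h₁, h₂])
    (σ r₁ : ℝ) (hσ : 0 < σ) (hr₁ : 0 < r₁)
    (s : ℝ) (hs : s = 1 - ‖⟪h₁, h₂⟫_ℂ‖ ^ 2 / (‖h₁‖ ^ 2 * ‖h₂‖ ^ 2)) (hspos : 0 < s)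
    (w : EuclideanSpace ℂ (Fin M))
    (hw : w = ((σ * Real.sqrt r₁ / (‖h₁‖ ^ 2 * ‖h₂‖ ^ 2 * s) : ℝ) : ℂ) •
        (((‖h₂‖ ^ 2 : ℝ) : ℂ) • h₁ - ⟪h₂, h₁⟫_ℂ • h₂)) :
    IsLeast
      ((fun u : EuclideanSpace ℂ (Fin M) => ‖u‖ ^ 2) ''
        {u : EuclideanSpace ℂ (Fin M) | ⟪h₂, u⟫_ℂ = 0 ∧ r₁ * σ ^ 2 ≤ ‖⟪h₁, u⟫_ℂ‖ ^ 2})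
      (r₁ * σ ^ 2 / (‖h₁‖ ^ 2 * s)) ∧
    (⟪h₂, w⟫_ℂ = 0 ∧ r₁ * σ ^ 2 ≤ ‖⟪h₁, w⟫_ℂ‖ ^ 2) ∧
    ‖w‖ ^ 2 = r₁ * σ ^ 2 / (‖h₁‖ ^ 2 * s) :=
  stmt_13_general M h₁ h₂ hind σ r₁ hr₁ s hs hspos w hw
end

section
/- Let h_{r1}, h_{r2} ∈ ℂ^N, G ∈ ℂ^{N×M}, and h_{d1}, h_{d2} ∈ ℂ^M. Set Φ_k = diag(h_{rk})·G ∈ ℂ^{N×M} for k = 1,2, and let R be the (N+1)×(N+1) block matrix R = [[Φ₁Φ₂ᴴ, Φ₁h_{d2}], [h_{d1}ᴴΦ₂ᴴ, h_{d1}ᴴh_{d2}]]. If R = 0, then for every phase vector v = (e^{jθ₁}, …, e^{jθ_N}) ∈ ℂ^N (indeed for every v ∈ ℂ^N), the effective channels h_k = Φ_kᴴv + h_{dk} satisfy h₁ᴴh₂ = 0. -/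
open scoped Matrix

namespace Matrix

variable {n m α : Type*} [Fintype n] [Fintype m] [CommSemiring α] [StarRing α]

theorem star_mulVec_add_dotProduct_mulVec_add_eq_fromBlocks (A B : Matrix n m α) (a b : m → α)
    (v : n → α) :
    star (Aᴴ *ᵥ v + a) ⬝ᵥ (Bᴴ *ᵥ v + b) =
      star (Sum.elim v 1) ⬝ᵥ
        (fromBlocks (A * Bᴴ) (of fun i (_ : Unit) => (A *ᵥ b) i)
          (of fun (_ : Unit) j => (star a ᵥ* Bᴴ) j) (of fun _ _ => star a ⬝ᵥ b) *ᵥ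
            Sum.elim v 1) := by
  have hmulVec : fromBlocks (A * Bᴴ) (of fun i (_ : Unit) => (A *ᵥ b) i)
      (of fun (_ : Unit) j => (star a ᵥ* Bᴴ) j) (of fun _ _ => star a ⬝ᵥ b) *ᵥ Sum.elim v 1 =
      Sum.elim ((A * Bᴴ) *ᵥ v + A *ᵥ b) fun _ => (star a ᵥ* Bᴴ) ⬝ᵥ v + star a ⬝ᵥ b := by
    ext (i | _) <;> simp [mulVec, dotProduct]
  have hUnit (c : α) : star (1 : Unit → α) ⬝ᵥ (fun _ => c) = c := by simp [dotProduct]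
  rw [hmulVec, Function.star_sumElim, sumElim_dotProduct_sumElim, hUnit, star_add, star_mulVec,
    conjTranspose_conjTranspose]
  simp only [add_dotProduct, dotProduct_add, dotProduct_mulVec, add_vecMul, vecMul_vecMul]
  abel

end Matrix

theorem stmt_14_general (N M : ℕ)
    (hd₁ hd₂ : Fin M → ℂ)
    (Φ₁ Φ₂ : Matrix (Fin N) (Fin M) ℂ)
    (R : Matrix (Fin N ⊕ Unit) (Fin N ⊕ Unit) ℂ)
    (hR : R = Matrix.fromBlocks (Φ₁ * Φ₂ᴴ) (Matrix.of fun i _ => (Φ₁ *ᵥ hd₂) i)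
        (Matrix.of fun _ j => (star hd₁ ᵥ* Φ₂ᴴ) j) (Matrix.of fun _ _ => star hd₁ ⬝ᵥ hd₂))
    (hR0 : R = 0) :
    ∀ v : Fin N → ℂ,
      star (Φ₁ᴴ *ᵥ v + hd₁) ⬝ᵥ (Φ₂ᴴ *ᵥ v + hd₂) = 0 := by
  intro v
  rw [Matrix.star_mulVec_add_dotProduct_mulVec_add_eq_fromBlocks, ← hR, hR0, Matrix.zero_mulVec,
    dotProduct_zero]

/-- Sufficiency direction of Proposition 4 of the paper: if the cross-correlation block
matrix `R` vanishes, then every choice of IRS phases yields orthogonal effective channels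
`h₁ᴴh₂ = 0`. -/
theorem stmt_14 (N M : ℕ) (hr₁ hr₂ : Fin N → ℂ) (G : Matrix (Fin N) (Fin M) ℂ)
    (hd₁ hd₂ : Fin M → ℂ)
    (Φ₁ Φ₂ : Matrix (Fin N) (Fin M) ℂ)
    (hΦ₁ : Φ₁ = Matrix.diagonal hr₁ * G) (hΦ₂ : Φ₂ = Matrix.diagonal hr₂ * G)
    (R : Matrix (Fin N ⊕ Unit) (Fin N ⊕ Unit) ℂ)
    (hR : R = Matrix.fromBlocks (Φ₁ * Φ₂ᴴ) (Matrix.of fun i _ => (Φ₁ *ᵥ hd₂) i)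
        (Matrix.of fun _ j => (star hd₁ ᵥ* Φ₂ᴴ) j) (Matrix.of fun _ _ => star hd₁ ⬝ᵥ hd₂))
    (hR0 : R = 0) :
    ∀ v : Fin N → ℂ,
      star (Φ₁ᴴ *ᵥ v + hd₁) ⬝ᵥ (Φ₂ᴴ *ᵥ v + hd₂) = 0 :=
  stmt_14_general N M hd₁ hd₂ Φ₁ Φ₂ R hR hR0
end

section
/- Let h₁, h₂ ∈ ℂ^M be nonzero, σ² > 0, r₁, r₂ ≥ 0, and let s = sin²α = 1 − |h₁ᴴh₂|²/(‖h₁‖²‖h₂‖²) with 0 < s ≤ 1. Then σ²(r₁/‖h₁‖² + r₂/‖h₂‖²) ≤ r₁(1+r₂)σ²/(‖h₁‖²(1+r₂s)) + r₂σ²/‖h₂‖², and σ²(r₁/‖h₁‖² + r₂/‖h₂‖²) ≤ (σ²/s)(r₁/‖h₁‖² + r₂/‖h₂‖²). -/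
open scoped InnerProductSpace

lemma le_mul_one_add_div_one_add_mul {K : Type*} [Field K] [LinearOrder K] [IsStrictOrderedRing K]
    {a r s : K} (ha : 0 ≤ a) (hr : 0 ≤ r) (hs0 : 0 ≤ s) (hs1 : s ≤ 1) :
    a ≤ a * (1 + r) / (1 + r * s) := by
  rw [le_div_iff₀ (by positivity)]
  exact mul_le_mul_of_nonneg_left (add_le_add_right (mul_le_of_le_one_right hr hs1) 1) ha

theorem stmt_15_general (M : ℕ) (h₁ h₂ : EuclideanSpace ℂ (Fin M))
    (σsq r₁ r₂ : ℝ) (hσ : 0 < σsq) (hr₁ : 0 ≤ r₁) (hr₂ : 0 ≤ r₂)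
    (s : ℝ) (hs0 : 0 < s) (hs1 : s ≤ 1) :
    σsq * (r₁ / ‖h₁‖ ^ 2 + r₂ / ‖h₂‖ ^ 2)
        ≤ r₁ * (1 + r₂) * σsq / (‖h₁‖ ^ 2 * (1 + r₂ * s)) + r₂ * σsq / ‖h₂‖ ^ 2 ∧
    σsq * (r₁ / ‖h₁‖ ^ 2 + r₂ / ‖h₂‖ ^ 2)
        ≤ (σsq / s) * (r₁ / ‖h₁‖ ^ 2 + r₂ / ‖h₂‖ ^ 2) := by
  constructor
  · calc σsq * (r₁ / ‖h₁‖ ^ 2 + r₂ / ‖h₂‖ ^ 2)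
        = σsq * r₁ / ‖h₁‖ ^ 2 + r₂ * σsq / ‖h₂‖ ^ 2 := by ring
      _ ≤ σsq * (r₁ * (1 + r₂) / (1 + r₂ * s)) / ‖h₁‖ ^ 2 + r₂ * σsq / ‖h₂‖ ^ 2 := by
        gcongr
        exact le_mul_one_add_div_one_add_mul hr₁ hr₂ hs0.le hs1
      _ = r₁ * (1 + r₂) * σsq / (‖h₁‖ ^ 2 * (1 + r₂ * s)) + r₂ * σsq / ‖h₂‖ ^ 2 := by
        rw [mul_comm (‖h₁‖ ^ 2), ← div_div]
        ring
  · gcongr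
    exact le_div_self hσ.le hs0 hs1

/-- Appendix G of the paper (Proposition 4): the orthogonal-channel ZFBF power
`p = σ²(r₁/‖h₁‖² + r₂/‖h₂‖²)` is at most both `P^NOMA` and `P^ZFBF`. -/
theorem stmt_15 (M : ℕ) (h₁ h₂ : EuclideanSpace ℂ (Fin M)) (hh₁ : h₁ ≠ 0) (hh₂ : h₂ ≠ 0)
    (σsq r₁ r₂ : ℝ) (hσ : 0 < σsq) (hr₁ : 0 ≤ r₁) (hr₂ : 0 ≤ r₂)
    (s : ℝ) (hs : s = 1 - ‖⟪h₁, h₂⟫_ℂ‖ ^ 2 / (‖h₁‖ ^ 2 * ‖h₂‖ ^ 2))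
    (hs0 : 0 < s) (hs1 : s ≤ 1) :
    σsq * (r₁ / ‖h₁‖ ^ 2 + r₂ / ‖h₂‖ ^ 2)
        ≤ r₁ * (1 + r₂) * σsq / (‖h₁‖ ^ 2 * (1 + r₂ * s)) + r₂ * σsq / ‖h₂‖ ^ 2 ∧
    σsq * (r₁ / ‖h₁‖ ^ 2 + r₂ / ‖h₂‖ ^ 2)
        ≤ (σsq / s) * (r₁ / ‖h₁‖ ^ 2 + r₂ / ‖h₂‖ ^ 2) :=
  stmt_15_general M h₁ h₂ σsq r₁ r₂ hσ hr₁ hr₂ s hs0 hs1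
end

section
/- Let X be a nonempty set, M a positive integer, and for m = 1,…,M let A_m : X → ℝ with A_m ≥ 0 and B_m : X → ℝ with B_m > 0. Then for every x ∈ X, the supremum over y ∈ ℝ^M of Σ_{m=1}^M (2y_m√(A_m(x)) − y_m²B_m(x)) equals Σ_{m=1}^M A_m(x)/B_m(x) and is attained at y_m = √(A_m(x))/B_m(x); consequently sup_{x∈X} Σ_m A_m(x)/B_m(x) = sup_{x∈X, y∈ℝ^M} Σ_m (2y_m√(A_m(x)) − y_m²B_m(x)), and the two maximization problems have the same optimal x-solutions. -/
/-! For fixed `x`, each summand `2 y √A - y² B` is a concave quadratic in `y` whose maximum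
`A / B` is attained at `y = √A / B` (complete the square: `A/B - (2 y √A - y² B) = (y B - √A)² / B`).
Hence the inner maximization over `y` gives back the sum of ratios, and maximizing over `(x, y)`
jointly is the same as maximizing the inner optimum over `x`. -/

open Finset

section JointMaximization

variable {X Y α : Type*} {f : X → Y → α} {g : X → α}

theorem csSup_setOf_eq_csSup_setOf_of_isGreatest [ConditionallyCompleteLinearOrder α]
    (hg : ∀ x, IsGreatest {t | ∃ y, t = f x y} (g x)) :
    sSup {t | ∃ x, t = g x} = sSup {t | ∃ x y, t = f x y} := by
  apply csSup_eq_csSup_of_forall_exists_le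
  · rintro _ ⟨x, rfl⟩
    obtain ⟨y, hy⟩ := (hg x).1
    exact ⟨g x, ⟨x, y, hy⟩, le_rfl⟩
  · rintro _ ⟨x, y, rfl⟩
    exact ⟨g x, ⟨x, rfl⟩, (hg x).2 ⟨y, rfl⟩⟩

theorem forall_le_iff_exists_forall_le_of_isGreatest [Preorder α]
    (hg : ∀ x, IsGreatest {t | ∃ y, t = f x y} (g x)) (x₀ : X) :
    (∀ x, g x ≤ g x₀) ↔ ∃ y₀, ∀ x y, f x y ≤ f x₀ y₀ := by
  obtain ⟨y₀, hy₀⟩ := (hg x₀).1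
  constructor
  · intro h
    exact ⟨y₀, fun x y => hy₀ ▸ ((hg x).2 ⟨y, rfl⟩).trans (h x)⟩
  · rintro ⟨y₁, hy₁⟩ x
    obtain ⟨y, hy⟩ := (hg x).1
    exact hy ▸ (hy₁ x y).trans ((hg x₀).2 ⟨y₁, rfl⟩)

end JointMaximization

section QuadraticTransform

variable {a b : ℝ}

theorem two_mul_mul_sqrt_sub_sq_mul_le_div (ha : 0 ≤ a) (hb : 0 < b) (y : ℝ) :
    2 * y * √a - y ^ 2 * b ≤ a / b := by
  rw [le_div_iff₀ hb]
  nlinarith [sq_nonneg (y * b - √a), Real.sq_sqrt ha]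

theorem two_mul_sqrt_div_mul_sqrt_sub_sq_mul_eq_div (ha : 0 ≤ a) (hb : 0 < b) :
    2 * (√a / b) * √a - (√a / b) ^ 2 * b = a / b := by
  field_simp
  linear_combination Real.sq_sqrt ha

theorem isGreatest_sum_quadraticTransform {ι : Type*} [Fintype ι] {a b : ι → ℝ}
    (ha : ∀ i, 0 ≤ a i) (hb : ∀ i, 0 < b i) :
    IsGreatest {t | ∃ y : ι → ℝ, t = ∑ i, (2 * y i * √(a i) - y i ^ 2 * b i)}
      (∑ i, a i / b i) := by
  refine ⟨⟨fun i => √(a i) / b i, ?_⟩, ?_⟩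
  · exact (sum_congr rfl fun i _ => two_mul_sqrt_div_mul_sqrt_sub_sq_mul_eq_div (ha i) (hb i)).symm
  · rintro _ ⟨y, rfl⟩
    exact sum_le_sum fun i _ => two_mul_mul_sqrt_sub_sq_mul_le_div (ha i) (hb i) (y i)

end QuadraticTransform

theorem stmt_16_general {X : Type*} (M : ℕ)
    (A B : Fin M → X → ℝ) (hA : ∀ m x, 0 ≤ A m x) (hB : ∀ m x, 0 < B m x) :
    (∀ x : X,
      IsGreatest
        {t : ℝ | ∃ y : Fin M → ℝ,
          t = ∑ m, (2 * y m * Real.sqrt (A m x) - (y m) ^ 2 * B m x)}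
        (∑ m, A m x / B m x)) ∧
    (∀ x : X,
      ∑ m, (2 * (Real.sqrt (A m x) / B m x) * Real.sqrt (A m x)
          - (Real.sqrt (A m x) / B m x) ^ 2 * B m x)
        = ∑ m, A m x / B m x) ∧
    sSup {t : ℝ | ∃ x : X, t = ∑ m, A m x / B m x}
      = sSup {t : ℝ | ∃ x : X, ∃ y : Fin M → ℝ,
          t = ∑ m, (2 * y m * Real.sqrt (A m x) - (y m) ^ 2 * B m x)} ∧
    (∀ x₀ : X,
      (∀ x : X, ∑ m, A m x / B m x ≤ ∑ m, A m x₀ / B m x₀) ↔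
      (∃ y₀ : Fin M → ℝ, ∀ (x : X) (y : Fin M → ℝ),
        ∑ m, (2 * y m * Real.sqrt (A m x) - (y m) ^ 2 * B m x)
          ≤ ∑ m, (2 * y₀ m * Real.sqrt (A m x₀) - (y₀ m) ^ 2 * B m x₀))) := by
  have hmax : ∀ x, IsGreatest
      {t | ∃ y : Fin M → ℝ, t = ∑ m, (2 * y m * √(A m x) - y m ^ 2 * B m x)}
      (∑ m, A m x / B m x) :=
    fun x => isGreatest_sum_quadraticTransform (hA · x) (hB · x)
  refine ⟨hmax, fun x => ?_, csSup_setOf_eq_csSup_setOf_of_isGreatest hmax,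
    forall_le_iff_exists_forall_le_of_isGreatest hmax⟩
  exact sum_congr rfl fun m _ => two_mul_sqrt_div_mul_sqrt_sub_sq_mul_eq_div (hA m x) (hB m x)

/-- The quadratic transform for sum-of-ratios fractional programming (Lemma 2 of the paper):
for each `x` the inner supremum over `y` of `∑ (2yₘ√(Aₘx) − yₘ²Bₘx)` equals `∑ Aₘx/Bₘx`,
attained at `yₘ = √(Aₘx)/Bₘx`; hence both maximization problems have the same optimal value
and the same optimal `x`-solutions. -/
theorem stmt_16 {X : Type*} [Nonempty X] (M : ℕ) (hM : 0 < M)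
    (A B : Fin M → X → ℝ) (hA : ∀ m x, 0 ≤ A m x) (hB : ∀ m x, 0 < B m x) :
    (∀ x : X,
      IsGreatest
        {t : ℝ | ∃ y : Fin M → ℝ,
          t = ∑ m, (2 * y m * Real.sqrt (A m x) - (y m) ^ 2 * B m x)}
        (∑ m, A m x / B m x)) ∧
    (∀ x : X,
      ∑ m, (2 * (Real.sqrt (A m x) / B m x) * Real.sqrt (A m x)
          - (Real.sqrt (A m x) / B m x) ^ 2 * B m x)
        = ∑ m, A m x / B m x) ∧
    sSup {t : ℝ | ∃ x : X, t = ∑ m, A m x / B m x}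
      = sSup {t : ℝ | ∃ x : X, ∃ y : Fin M → ℝ,
          t = ∑ m, (2 * y m * Real.sqrt (A m x) - (y m) ^ 2 * B m x)} ∧
    (∀ x₀ : X,
      (∀ x : X, ∑ m, A m x / B m x ≤ ∑ m, A m x₀ / B m x₀) ↔
      (∃ y₀ : Fin M → ℝ, ∀ (x : X) (y : Fin M → ℝ),
        ∑ m, (2 * y m * Real.sqrt (A m x) - (y m) ^ 2 * B m x)
          ≤ ∑ m, (2 * y₀ m * Real.sqrt (A m x₀) - (y₀ m) ^ 2 * B m x₀))) :=
  stmt_16_general M A B hA hB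
end
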